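/- arXiv:1907.09687 — 2 statements merged into one kernel-verified Lean document; each statement's English description precedes it below -/
import Mathlib

section
/- Let (X,B,b) be a coarse proximity space. Define A ⊑ B iff for all C ⊆ X, A b C implies B b C. Then A ⊑ B if and only if A' ⊆ B', where A', B' are the traces of A and B in the boundary UX. -/
open Set

universe u
variable {X : Type u}

/-- The axioms of a coarse proximity structure: a bornology `B` (contains singletons,
closed under subsets and finite unions) and a relation `b` satisfying symmetry,
unboundedness of related sets, relatedness of sets with unbounded intersection,
the union axiom, and the strong axiom. -/
structure IsCoarseProximity (B : Set (Set X)) (b : Set X → Set X → Prop) : Prop where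
  singleton_mem : ∀ x : X, {x} ∈ B
  subset_mem : ∀ A C : Set X, A ∈ B → C ⊆ A → C ∈ B
  union_mem : ∀ A C : Set X, A ∈ B → C ∈ B → A ∪ C ∈ B
  symm : ∀ A C : Set X, b A C → b C A
  unbounded_of_rel : ∀ A C : Set X, b A C → A ∉ B ∧ C ∉ B
  rel_of_inter : ∀ A C : Set X, A ∩ C ∉ B → b A C
  union_iff : ∀ A C D : Set X, b (A ∪ C) D ↔ b A D ∨ b C D
  strong : ∀ A C : Set X, ¬ b A C → ∃ E : Set X, ¬ b A E ∧ ¬ b (univ \ E) C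

/-- A coarse proximity space structure on `X`. -/
structure CoarseProximity (X : Type u) where
  B : Set (Set X)
  b : Set X → Set X → Prop
  isCP : IsCoarseProximity B b

/-- The weak asymptotic resemblance induced by a coarse proximity. -/
def phi (cp : CoarseProximity X) (A C : Set X) : Prop :=
  (∀ C' ⊆ C, C' ∉ cp.B → cp.b A C') ∧ (∀ A' ⊆ A, A' ∉ cp.B → cp.b A' C)

/-- The discrete extension of the coarse proximity `b`. -/
def deltaExt (cp : CoarseProximity X) (A C : Set X) : Prop :=
  (A ∩ C).Nonempty ∨ cp.b A C

/-- A cluster in the proximity space given by the discrete extension of `b`: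
any two members are close, any set close to all members is a member, and a union
belongs only if one of the pieces does. -/
structure IsCluster (cp : CoarseProximity X) (σ : Set (Set X)) : Prop where
  close : ∀ A ∈ σ, ∀ C ∈ σ, deltaExt cp A C
  mem_of_close : ∀ C : Set X, (∀ A ∈ σ, deltaExt cp C A) → C ∈ σ
  union_cases : ∀ A C : Set X, A ∪ C ∈ σ → A ∈ σ ∨ C ∈ σ

/-- The boundary `𝒰X` of the coarse proximity space: clusters (in the Smirnov
compactification of the discrete extension) containing no bounded set. -/
def UX (cp : CoarseProximity X) : Set (Set (Set X)) :=
  {σ | IsCluster cp σ ∧ ∀ A ∈ σ, A ∉ cp.B}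

/-- The trace `A' = cl_𝔛(A) ∩ 𝒰X` of `A ⊆ X` in the boundary; a cluster of the
boundary lies in the closure of `A` in the Smirnov compactification iff `A` is a
member of the cluster. -/
def trace (cp : CoarseProximity X) (A : Set X) : Set (Set (Set X)) :=
  {σ ∈ UX cp | A ∈ σ}

/-- Relative closure in a subspace `Y` of the Smirnov compactification: a cluster
`σ ∈ Y` lies in the closure of `S ⊆ Y` iff every subset of `X` absorbing `S`
(i.e. belonging to every cluster of `S`) belongs to `σ`. -/
def clRel (Y S : Set (Set (Set X))) : Set (Set (Set X)) :=
  {σ ∈ Y | ∀ C : Set X, (∀ τ ∈ S, C ∈ τ) → C ∈ σ}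

/-- A subset of `Y` is relatively closed iff it contains its relative closure. -/
def relClosed (Y K : Set (Set (Set X))) : Prop :=
  K ⊆ Y ∧ clRel Y K ⊆ K

/-- Interior in the boundary `𝒰X`. -/
def intU (cp : CoarseProximity X) (S : Set (Set (Set X))) : Set (Set (Set X)) :=
  UX cp \ clRel (UX cp) (UX cp \ S)

/-- Closed subsets of the boundary `𝒰X`. -/
def IsClosedU (cp : CoarseProximity X) (K : Set (Set (Set X))) : Prop :=
  relClosed (UX cp) K

/-- Open subsets of the boundary `𝒰X`. -/
def IsOpenU (cp : CoarseProximity X) (U : Set (Set (Set X))) : Prop :=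
  U ⊆ UX cp ∧ IsClosedU cp (UX cp \ U)

/-- `A ⊑ B` iff every set coarsely close to `A` is coarsely close to `B`. -/
def sqsub (cp : CoarseProximity X) (A C : Set X) : Prop :=
  ∀ D : Set X, cp.b A D → cp.b C D

/-- `A ≪ B`: `B` is a coarse neighborhood of `A`. -/
def ll (cp : CoarseProximity X) (A C : Set X) : Prop :=
  ¬ cp.b A (Set.univ \ C)

/-- `A ≪_w B` iff there is `C` with `A ≪ C ⊑ B`. -/
def llw (cp : CoarseProximity X) (A C : Set X) : Prop :=
  ∃ D : Set X, ll cp A D ∧ sqsub cp D C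

section Aux

variable (cp : CoarseProximity X)

lemma b_mono_left {A A' C : Set X} (h : cp.b A C) (hs : A ⊆ A') : cp.b A' C := by
  have := (cp.isCP.union_iff A A' C).mpr (Or.inl h)
  rwa [Set.union_eq_self_of_subset_left hs] at this

lemma b_mono_right {A C C' : Set X} (h : cp.b A C) (hs : C ⊆ C') : cp.b A C' :=
  cp.isCP.symm _ _ (b_mono_left cp (cp.isCP.symm _ _ h) hs)

lemma delta_symm {A C : Set X} (h : deltaExt cp A C) : deltaExt cp C A := by
  rcases h with ⟨x, hx⟩ | h
  · exact Or.inl ⟨x, hx.2, hx.1⟩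
  · exact Or.inr (cp.isCP.symm _ _ h)

lemma delta_mono_right {A C C' : Set X} (h : deltaExt cp A C) (hs : C ⊆ C') :
    deltaExt cp A C' := by
  rcases h with ⟨x, hx⟩ | h
  · exact Or.inl ⟨x, hx.1, hs hx.2⟩
  · exact Or.inr (b_mono_right cp h hs)

lemma delta_union_right {A C D : Set X} (h : deltaExt cp A (C ∪ D)) :
    deltaExt cp A C ∨ deltaExt cp A D := by
  rcases h with ⟨x, hx1, (hx2 | hx2)⟩ | h
  · exact Or.inl (Or.inl ⟨x, hx1, hx2⟩)
  · exact Or.inr (Or.inl ⟨x, hx1, hx2⟩)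
  · rcases (cp.isCP.union_iff C D A).mp (cp.isCP.symm _ _ h) with h | h
    · exact Or.inl (Or.inr (cp.isCP.symm _ _ h))
    · exact Or.inr (Or.inr (cp.isCP.symm _ _ h))

lemma delta_strong {A C : Set X} (h : ¬ deltaExt cp A C) :
    ∃ E : Set X, ¬ deltaExt cp A E ∧ ¬ deltaExt cp (univ \ E) C := by
  have hne : ¬ (A ∩ C).Nonempty := fun hn => h (Or.inl hn)
  have hb : ¬ cp.b A C := fun hb => h (Or.inr hb)
  obtain ⟨E, hE1, hE2⟩ := cp.isCP.strong A C hb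
  refine ⟨(E \ A) ∪ C, ?_, ?_⟩
  · rintro (⟨x, hxA, (hxE | hxC)⟩ | hb')
    · exact hxE.2 hxA
    · exact hne ⟨x, hxA, hxC⟩
    · rcases (cp.isCP.union_iff (E \ A) C A).mp (cp.isCP.symm _ _ hb') with h' | h'
      · exact hE1 (b_mono_right cp (cp.isCP.symm _ _ h') diff_subset)
      · exact hb (cp.isCP.symm _ _ h')
  · rintro (⟨x, hx1, hx2⟩ | hb')
    · exact hx1.2 (Or.inr hx2)
    · have hsub : univ \ ((E \ A) ∪ C) ⊆ (univ \ E) ∪ A := by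
        intro x hx
        by_cases hxA : x ∈ A
        · exact Or.inr hxA
        · refine Or.inl ⟨trivial, fun hxE => hx.2 (Or.inl ⟨hxE, hxA⟩)⟩
      rcases (cp.isCP.union_iff (univ \ E) A C).mp (b_mono_left cp hb' hsub) with h' | h'
      · exact hE2 h'
      · exact hb h'

lemma cluster_of_ultrafilter (F : Ultrafilter X) :
    IsCluster cp {C | ∀ U ∈ F, deltaExt cp C U} := by
  have hmemF : ∀ U ∈ F, U ∈ {C | ∀ U ∈ F, deltaExt cp C U} := by
    intro U hU V hV
    exact Or.inl (Filter.nonempty_of_mem ((F : Filter X).inter_mem hU hV))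
  constructor
  · intro P hP Q hQ
    by_contra hnot
    obtain ⟨E, hE1, hE2⟩ := delta_strong cp hnot
    rcases F.mem_or_compl_mem E with hE | hE
    · exact hE1 (hP E hE)
    · refine hE2 ?_
      have := delta_symm cp (hQ Eᶜ hE)
      rwa [compl_eq_univ_diff] at this
  · intro C hC U hU
    exact hC U (hmemF U hU)
  · intro P Q hPQ
    by_contra hcon
    push_neg at hcon
    obtain ⟨hnP, hnQ⟩ := hcon
    simp only [mem_setOf_eq, not_forall] at hnP hnQ
    obtain ⟨U, hU, hnPU⟩ := hnP
    obtain ⟨V, hV, hnQV⟩ := hnQ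
    have hW : U ∩ V ∈ F := (F : Filter X).inter_mem hU hV
    rcases hPQ (U ∩ V) hW with ⟨x, (hx1 | hx1), hx2⟩ | h
    · exact hnPU (Or.inl ⟨x, hx1, hx2.1⟩)
    · exact hnQV (Or.inl ⟨x, hx1, hx2.2⟩)
    · rcases (cp.isCP.union_iff P Q (U ∩ V)).mp h with h | h
      · exact hnPU (Or.inr (b_mono_right cp h inter_subset_left))
      · exact hnQV (Or.inr (b_mono_right cp h inter_subset_right))

lemma b_of_mem_UX {σ : Set (Set X)} (hσ : σ ∈ UX cp) {P Q : Set X}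
    (hP : P ∈ σ) (hQ : Q ∈ σ) : cp.b P Q := by
  by_cases hb : P ∩ Q ∈ cp.B
  · have hPQ : P \ Q ∈ σ ∨ P ∩ Q ∈ σ :=
      hσ.1.union_cases _ _ (by rwa [Set.diff_union_inter])
    have hd : P \ Q ∈ σ := hPQ.resolve_right (fun hmem => hσ.2 _ hmem hb)
    have hbd : cp.b (P \ Q) Q := by
      rcases hσ.1.close _ hd _ hQ with ⟨x, hx⟩ | h
      · exact (hx.1.2 hx.2).elim
      · exact h
    have := (cp.isCP.union_iff (P \ Q) (P ∩ Q) Q).mpr (Or.inl hbd)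
    rwa [Set.diff_union_inter] at this
  · exact cp.isCP.rel_of_inter _ _ hb

end Aux

/-- `A ⊑ B` iff `A' ⊆ B'` in the boundary `𝒰X`. -/
theorem sqsub_iff_trace_subset (cp : CoarseProximity X) (A B : Set X) :
    sqsub cp A B ↔ trace cp A ⊆ trace cp B := by
  constructor
  · intro h σ hσ
    obtain ⟨hU, hA⟩ := hσ
    exact ⟨hU, hU.1.mem_of_close B (fun C hC => Or.inr (h C (b_of_mem_UX cp hU hA hC)))⟩
  · intro h D hAD
    rcases isEmpty_or_nonempty X with hX | hX
    · have : A = B := by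
        ext x
        exact (hX.false x).elim
      rwa [← this]
    · have hempty : ∅ ∈ cp.B := by
        obtain ⟨x⟩ := hX
        exact cp.isCP.subset_mem {x} ∅ (cp.isCP.singleton_mem x) (empty_subset _)
      have hnd_empty : ∀ E : Set X, ¬ deltaExt cp E ∅ := by
        rintro E (⟨x, hx⟩ | hb)
        · exact hx.2
        · exact (cp.isCP.unbounded_of_rel _ _ hb).2 hempty
      -- the filter generated by complements of "bad" sets
      set G : Filter X :=
        { sets := {V | ∃ U₁ U₂ U₃ : Set X, ¬ deltaExt cp A U₁ ∧ ¬ deltaExt cp D U₂ ∧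
            U₃ ∈ cp.B ∧ (U₁ ∪ U₂ ∪ U₃)ᶜ ⊆ V}
          univ_sets := ⟨∅, ∅, ∅, hnd_empty A, hnd_empty D, hempty, subset_univ _⟩
          sets_of_superset := by
            rintro V W ⟨U₁, U₂, U₃, h1, h2, h3, h4⟩ hVW
            exact ⟨U₁, U₂, U₃, h1, h2, h3, h4.trans hVW⟩
          inter_sets := by
            rintro V W ⟨U₁, U₂, U₃, h1, h2, h3, h4⟩ ⟨W₁, W₂, W₃, g1, g2, g3, g4⟩
            refine ⟨U₁ ∪ W₁, U₂ ∪ W₂, U₃ ∪ W₃, ?_, ?_, cp.isCP.union_mem _ _ h3 g3, ?_⟩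
            · intro hd
              rcases delta_union_right cp hd with hd | hd
              · exact h1 hd
              · exact g1 hd
            · intro hd
              rcases delta_union_right cp hd with hd | hd
              · exact h2 hd
              · exact g2 hd
            · intro x hx
              simp only [mem_compl_iff, mem_union, not_or] at hx
              constructor
              · exact h4 (by simp only [mem_compl_iff, mem_union, not_or]; tauto)
              · exact g4 (by simp only [mem_compl_iff, mem_union, not_or]; tauto) } with hG
      haveI : G.NeBot := by
        rw [← Filter.forall_mem_nonempty_iff_neBot]
        rintro V ⟨U₁, U₂, U₃, h1, h2, h3, h4⟩
        rcases (U₁ ∪ U₂ ∪ U₃)ᶜ.eq_empty_or_nonempty with hc | hc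
        · exfalso
          have hDsub : D ⊆ U₁ ∪ U₂ ∪ U₃ := by
            intro x _
            by_contra hx
            exact absurd (hc ▸ hx : x ∈ (∅ : Set X)) (fun h => h)
          have hDeq : D ∩ U₁ ∪ (D ∩ U₂ ∪ D ∩ U₃) = D := by
            ext x
            simp only [mem_union, mem_inter_iff]
            constructor
            · tauto
            · intro hx
              rcases hDsub hx with (h | h) | h <;> tauto
          have hb' : cp.b A (D ∩ U₁ ∪ (D ∩ U₂ ∪ D ∩ U₃)) := by rwa [hDeq]
          rcases (cp.isCP.union_iff _ _ A).mp (cp.isCP.symm _ _ hb') with hcase | hcase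
          · exact h1 (Or.inr (b_mono_right cp (cp.isCP.symm _ _ hcase) inter_subset_right))
          · rcases (cp.isCP.union_iff _ _ A).mp hcase with hcase | hcase
            · have : D ∩ U₂ ∉ cp.B := (cp.isCP.unbounded_of_rel _ _ hcase).1
              have hrel : cp.b D U₂ := cp.isCP.rel_of_inter D U₂ this
              exact h2 (Or.inr hrel)
            · exact (cp.isCP.unbounded_of_rel _ _ hcase).1
                (cp.isCP.subset_mem U₃ _ h3 inter_subset_right)
        · exact hc.mono h4
      set F : Ultrafilter X := Ultrafilter.of G with hF
      have hle : (F : Filter X) ≤ G := Ultrafilter.of_le G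
      have hkey : ∀ U₁ U₂ U₃ : Set X, ¬ deltaExt cp A U₁ → ¬ deltaExt cp D U₂ →
          U₃ ∈ cp.B → (U₁ ∪ U₂ ∪ U₃)ᶜ ∈ F := by
        intro U₁ U₂ U₃ h1 h2 h3
        exact hle ⟨U₁, U₂, U₃, h1, h2, h3, Set.Subset.rfl⟩
      have hAF : ∀ U ∈ F, deltaExt cp A U := by
        intro U hU
        by_contra hnd
        have : (U ∪ ∅ ∪ ∅)ᶜ ∈ F := hkey U ∅ ∅ hnd (hnd_empty D) hempty
        rw [show U ∪ ∅ ∪ ∅ = U by simp] at this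
        exact (Ultrafilter.compl_mem_iff_notMem.mp this) hU
      have hDF : ∀ U ∈ F, deltaExt cp D U := by
        intro U hU
        by_contra hnd
        have : (∅ ∪ U ∪ ∅)ᶜ ∈ F := hkey ∅ U ∅ (hnd_empty A) hnd hempty
        rw [show ∅ ∪ U ∪ ∅ = U by simp] at this
        exact (Ultrafilter.compl_mem_iff_notMem.mp this) hU
      set σ : Set (Set X) := {C | ∀ U ∈ F, deltaExt cp C U} with hσdef
      have hσUX : σ ∈ UX cp := by
        refine ⟨cluster_of_ultrafilter cp F, ?_⟩
        intro C hC hCB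
        have hcc : Cᶜ ∈ F := by
          have : (∅ ∪ ∅ ∪ C)ᶜ ∈ F := hkey ∅ ∅ C (hnd_empty A) (hnd_empty D) hCB
          rwa [show ∅ ∪ ∅ ∪ C = C by simp] at this
        rcases hC Cᶜ hcc with ⟨x, hx⟩ | hb
        · exact hx.2 hx.1
        · exact (cp.isCP.unbounded_of_rel _ _ hb).1 hCB
      have hσA : σ ∈ trace cp A := ⟨hσUX, hAF⟩
      have hσB : σ ∈ trace cp B := h hσA
      exact b_of_mem_UX cp hσUX hσB.2 hDF
end

section
/- Let (X,B,b) be a coarse proximity space. Define A ≪ B iff A b̄ (X\B), A ⊑ B iff for all C, A b C implies B b C, and A ≪_w B iff there is C with A ≪ C ⊑ B. Then A ≪_w B if and only if A' ⊆ int(B') in the boundary UX. -/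
/-!
Both directions go through the clusters of the boundary. If `A ≪ D ⊑ B`, every boundary cluster
avoiding `B` avoids `D` and hence contains `X \ D`, which is far from `A`; so no cluster
containing `A` is in the closure of `𝒰X \ B'`. Conversely, if `A ≪_w B` fails, the sets `E`
with `(X \ E)' ⊆ B'` form a filter all of whose members are close to `A`; an ultrafilter finer
than this filter and than the coarse neighbourhoods of `A` yields a boundary cluster containing
`A`, and the strong axiom shows that this cluster lies in the closure of `𝒰X \ B'`.
-/

open Set

universe u
variable {X : Type u}

open Filter

namespace CoarseProximity

variable {cp : CoarseProximity X} {A C D : Set X} {σ : Set (Set X)}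

theorem b_symm (h : cp.b A C) : cp.b C A :=
  cp.isCP.symm _ _ h

theorem b_mono_left {A' : Set X} (h : cp.b A C) (hA : A ⊆ A') : cp.b A' C := by
  simpa [union_eq_self_of_subset_left hA] using (cp.isCP.union_iff A A' C).2 (Or.inl h)

theorem b_mono_right {C' : Set X} (h : cp.b A C) (hC : C ⊆ C') : cp.b A C' :=
  b_symm (b_mono_left (b_symm h) hC)

theorem not_b_of_mem_B (hA : A ∈ cp.B) : ¬ cp.b A C :=
  fun h => (cp.isCP.unbounded_of_rel _ _ h).1 hA

theorem deltaExt_symm (h : deltaExt cp A C) : deltaExt cp C A :=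
  h.imp (fun h => by rwa [inter_comm]) b_symm

theorem deltaExt_mono_left {A' : Set X} (h : deltaExt cp A C) (hA : A ⊆ A') :
    deltaExt cp A' C :=
  h.imp (fun h => h.mono (inter_subset_inter_left _ hA)) (fun h => b_mono_left h hA)

theorem deltaExt_mono_right {C' : Set X} (h : deltaExt cp A C) (hC : C ⊆ C') :
    deltaExt cp A C' :=
  deltaExt_symm (deltaExt_mono_left (deltaExt_symm h) hC)

theorem deltaExt_union_left : deltaExt cp (A ∪ C) D ↔ deltaExt cp A D ∨ deltaExt cp C D := by
  simp only [deltaExt, union_inter_distrib_right, union_nonempty, cp.isCP.union_iff]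
  tauto

theorem deltaExt_strong (h : ¬ deltaExt cp A C) :
    ∃ E, ¬ deltaExt cp A E ∧ ¬ deltaExt cp (univ \ E) C := by
  obtain ⟨hAC, hbAC⟩ := not_or.1 h
  obtain ⟨E₀, hAE₀, hE₀C⟩ := cp.isCP.strong A C hbAC
  -- `E₀ ∪ C` already works for `b`; removing `A` makes it disjoint from `A` as well.
  refine ⟨(E₀ ∪ C) \ A, ?_, ?_⟩ <;> rintro (⟨x, hx⟩ | hb)
  · exact hx.2.2 hx.1
  · rcases (cp.isCP.union_iff E₀ C A).1 (b_symm (b_mono_right hb sdiff_subset)) with h | h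
    · exact hAE₀ (b_symm h)
    · exact hbAC (b_symm h)
  · exact hAC ⟨x, by_contra fun hxA => hx.1.2 ⟨Or.inr hx.2, hxA⟩, hx.2⟩
  · have hsub : univ \ ((E₀ ∪ C) \ A) ⊆ (univ \ E₀) ∪ A := fun x ⟨_, hx⟩ =>
      (em (x ∈ A)).elim Or.inr fun hxA =>
        Or.inl ⟨trivial, fun hxE₀ => hx ⟨Or.inl hxE₀, hxA⟩⟩
    rcases (cp.isCP.union_iff _ _ _).1 (b_mono_left hb hsub) with h | h
    · exact hE₀C h
    · exact hbAC h

theorem _root_.IsCluster.mem_of_superset (hσ : IsCluster cp σ) (hA : A ∈ σ) (hAC : A ⊆ C) :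
    C ∈ σ :=
  hσ.mem_of_close C fun M hM => deltaExt_mono_left (hσ.close A hA M hM) hAC

theorem _root_.IsCluster.exists_notMem_not_deltaExt (hσ : IsCluster cp σ) (hC : C ∉ σ) :
    ∃ E ∉ σ, ¬ deltaExt cp (univ \ E) C := by
  obtain ⟨M, hMσ, hCM⟩ : ∃ M ∈ σ, ¬ deltaExt cp C M := by
    by_contra! h
    exact hC (hσ.mem_of_close C h)
  obtain ⟨E, hME, hEC⟩ := deltaExt_strong fun h => hCM (deltaExt_symm h)
  exact ⟨E, fun hE => hME (hσ.close M hMσ E hE), hEC⟩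

theorem univ_mem_of_mem_UX (hσ : σ ∈ UX cp) : univ ∈ σ :=
  hσ.1.mem_of_close univ fun M hM =>
    Or.inr (cp.isCP.rel_of_inter _ _ (by rw [univ_inter]; exact hσ.2 M hM))

theorem b_of_mem_UX (hσ : σ ∈ UX cp) (hA : A ∈ σ) (hC : C ∈ σ) : cp.b A C := by
  by_cases hAC : A ∩ C ∈ cp.B
  · have hAC' : A \ C ∈ σ := (hσ.1.union_cases _ _ (by rwa [sdiff_union_inter])).resolve_right
      fun h => hσ.2 _ h hAC
    rcases hσ.1.close _ hAC' _ hC with ⟨x, hx⟩ | h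
    · exact (hx.1.2 hx.2).elim
    · exact b_mono_left h sdiff_subset
  · exact cp.isCP.rel_of_inter _ _ hAC

theorem univ_mem_UX (h : ∅ ∉ cp.B) : (univ : Set (Set X)) ∈ UX cp := by
  have hb : cp.b ∅ ∅ := cp.isCP.rel_of_inter _ _ (by rwa [inter_self])
  refine ⟨⟨fun A _ C _ => Or.inr ?_, fun _ _ => trivial, fun _ _ _ => Or.inl trivial⟩,
    fun A _ hA => h (cp.isCP.subset_mem _ _ hA (empty_subset A))⟩
  exact b_mono_right (b_mono_left hb (empty_subset A)) (empty_subset C)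

theorem trace_empty (hempty : ∅ ∈ cp.B) : trace cp ∅ = ∅ :=
  eq_empty_of_forall_notMem fun _ ⟨hσ, hemptyσ⟩ => hσ.2 ∅ hemptyσ hempty

theorem trace_mono (h : A ⊆ C) : trace cp A ⊆ trace cp C :=
  fun _ ⟨hσ, hAσ⟩ => ⟨hσ, hσ.1.mem_of_superset hAσ h⟩

theorem trace_union_subset : trace cp (A ∪ C) ⊆ trace cp A ∪ trace cp C :=
  fun _ ⟨hσ, hACσ⟩ => (hσ.1.union_cases A C hACσ).imp (⟨hσ, ·⟩) (⟨hσ, ·⟩)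

theorem clRel_mono {Y S T : Set (Set (Set X))} (h : S ⊆ T) : clRel Y S ⊆ clRel Y T :=
  fun _ ⟨hσ, hσS⟩ => ⟨hσ, fun C hC => hσS C fun τ hτ => hC τ (h hτ)⟩

theorem intU_mono {S T : Set (Set (Set X))} (h : S ⊆ T) : intU cp S ⊆ intU cp T :=
  sdiff_subset_sdiff_right (clRel_mono (sdiff_subset_sdiff_right h))

theorem trace_subset_trace_of_sqsub (h : sqsub cp C D) : trace cp C ⊆ trace cp D :=
  fun _ ⟨hσ, hCσ⟩ =>
    ⟨hσ, hσ.1.mem_of_close D fun E hE => Or.inr (h E (b_of_mem_UX hσ hCσ hE))⟩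

theorem trace_subset_intU_of_ll (h : ll cp A D) : trace cp A ⊆ intU cp (trace cp D) := by
  rintro σ ⟨hσ, hAσ⟩
  refine ⟨hσ, fun hcl => h (b_of_mem_UX hσ hAσ (hcl.2 _ ?_))⟩
  rintro τ ⟨hτ, hτD⟩
  have hτ_univ : D ∪ (univ \ D) ∈ τ := by
    rw [union_sdiff_cancel (subset_univ D)]
    exact univ_mem_of_mem_UX hτ
  exact (hτ.1.union_cases _ _ hτ_univ).resolve_left fun hDτ => hτD ⟨hτ, hDτ⟩

variable (cp) in
def clusterOf (𝒰 : Ultrafilter X) : Set (Set X) :=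
  {S | ∀ U ∈ 𝒰, deltaExt cp S U}

theorem mem_clusterOf_of_mem {𝒰 : Ultrafilter X} {U : Set X} (hU : U ∈ 𝒰) :
    U ∈ clusterOf cp 𝒰 :=
  fun _ hV => Or.inl (𝒰.nonempty_of_mem (inter_mem hU hV))

theorem isCluster_clusterOf (𝒰 : Ultrafilter X) : IsCluster cp (clusterOf cp 𝒰) where
  close S hS T hT := by
    by_contra hST
    obtain ⟨E, hSE, hET⟩ := deltaExt_strong hST
    rcases 𝒰.mem_or_compl_mem E with hE | hE
    · exact hSE (hS E hE)
    · exact hET (deltaExt_symm (by simpa [compl_eq_univ_sdiff] using hT _ hE))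
  mem_of_close C hC U hU := hC U (mem_clusterOf_of_mem hU)
  union_cases S T hST := by
    by_contra! h
    obtain ⟨U₁, hU₁, hSU₁⟩ : ∃ U ∈ 𝒰, ¬ deltaExt cp S U := by
      simpa [clusterOf] using h.1
    obtain ⟨U₂, hU₂, hTU₂⟩ : ∃ U ∈ 𝒰, ¬ deltaExt cp T U := by
      simpa [clusterOf] using h.2
    rcases deltaExt_union_left.1 (hST _ (inter_mem hU₁ hU₂)) with h | h
    · exact hSU₁ (deltaExt_mono_right h inter_subset_left)
    · exact hTU₂ (deltaExt_mono_right h inter_subset_right)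

theorem clusterOf_mem_UX {𝒰 : Ultrafilter X} (h : ∀ U ∈ 𝒰, U ∉ cp.B) :
    clusterOf cp 𝒰 ∈ UX cp := by
  refine ⟨isCluster_clusterOf 𝒰, fun S hS hSB => h S ?_ hSB⟩
  by_contra hS𝒰
  rcases hS Sᶜ (Ultrafilter.compl_mem_iff_notMem.2 hS𝒰) with ⟨x, hx, hx'⟩ | hb
  · exact hx' hx
  · exact not_b_of_mem_B hSB hb

/-- The filter of sets `S` with `A ≪ S`. -/
def coarseNhds (hempty : ∅ ∈ cp.B) (A : Set X) : Filter X :=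
  comk (fun T => ¬ cp.b A T) (fun h => not_b_of_mem_B hempty (b_symm h))
    (fun _ hT _ hST h => hT (b_mono_right h hST))
    (fun _ hS _ hT h => ((cp.isCP.union_iff _ _ A).1 (b_symm h)).elim
      (fun h => hS (b_symm h)) (fun h => hT (b_symm h)))

theorem exists_mem_UX_of_forall_b (hempty : ∅ ∈ cp.B) {ℱ : Filter X}
    (h : ∀ E ∈ ℱ, cp.b A E) :
    ∃ σ ∈ UX cp, A ∈ σ ∧ ∀ E ∈ ℱ, E ∈ σ := by
  have : (ℱ ⊓ coarseNhds hempty A).NeBot := inf_neBot_iff.2 fun E hE S hS => by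
    by_contra hES
    exact hS (b_mono_right (h E hE) fun x hxE hxS => hES ⟨x, hxE, hxS⟩)
  obtain ⟨𝒰, h𝒰⟩ := Ultrafilter.exists_le (ℱ ⊓ coarseNhds hempty A)
  have hA𝒰 : ∀ U ∈ 𝒰, cp.b A U := fun U hU => by
    by_contra hAU
    have hUc : Uᶜ ∈ 𝒰 := (le_inf_iff.1 h𝒰).2 (by simpa [coarseNhds] using hAU)
    exact Ultrafilter.compl_mem_iff_notMem.1 hUc hU
  refine ⟨clusterOf cp 𝒰, ?_, fun U hU => Or.inr (hA𝒰 U hU),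
    fun E hE => mem_clusterOf_of_mem ((le_inf_iff.1 h𝒰).1 hE)⟩
  exact clusterOf_mem_UX fun U hU => (cp.isCP.unbounded_of_rel _ _ (hA𝒰 U hU)).2

theorem exists_mem_UX_of_b (hempty : ∅ ∈ cp.B) (h : cp.b A C) :
    ∃ σ ∈ UX cp, A ∈ σ ∧ C ∈ σ := by
  obtain ⟨σ, hσ, hAσ, hCσ⟩ :=
    exists_mem_UX_of_forall_b hempty (ℱ := 𝓟 C) fun E hE => b_mono_right h hE
  exact ⟨σ, hσ, hAσ, hCσ C (mem_principal_self C)⟩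

theorem sqsub_of_trace_subset_trace (hempty : ∅ ∈ cp.B) (h : trace cp C ⊆ trace cp D) :
    sqsub cp C D := fun _ hCF => by
  obtain ⟨σ, hσ, hCσ, hFσ⟩ := exists_mem_UX_of_b hempty hCF
  exact b_of_mem_UX hσ (h ⟨hσ, hCσ⟩).2 hFσ

theorem exists_ll_trace_subset (hempty : ∅ ∈ cp.B) {S : Set (Set (Set X))}
    (h : trace cp A ⊆ intU cp S) : ∃ C, ll cp A C ∧ trace cp C ⊆ S := by
  by_contra! hA
  let ℰ : Filter X := comk (fun T => trace cp T ⊆ S)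
    (by rw [trace_empty hempty]; exact empty_subset S)
    (fun _ hT _ hT' => (trace_mono hT').trans hT)
    (fun _ hT _ hT' => trace_union_subset.trans (union_subset hT hT'))
  have hAℰ : ∀ E ∈ ℰ, cp.b A E := fun E hE => by
    by_contra hAE
    exact hA Eᶜ (by rwa [ll, ← compl_eq_univ_sdiff, compl_compl]) hE
  obtain ⟨σ, hσ, hAσ, hℰσ⟩ := exists_mem_UX_of_forall_b hempty hAℰ
  refine (h ⟨hσ, hAσ⟩).2 ⟨hσ, fun C hC => ?_⟩
  by_contra hCσ
  obtain ⟨E, hEσ, hEC⟩ := hσ.1.exists_notMem_not_deltaExt hCσ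
  refine hEσ (hℰσ E fun τ hτ => ?_)
  by_contra hτS
  rw [← compl_eq_univ_sdiff] at hEC
  exact hEC (hτ.1.1.close _ hτ.2 _ (hC τ ⟨hτ.1, hτS⟩))

end CoarseProximity

open CoarseProximity

/-- `A ≪_w B` iff `A' ⊆ int(B')` in the boundary `𝒰X`. -/
theorem llw_iff_trace_subset_int (cp : CoarseProximity X) (A B : Set X) :
    llw cp A B ↔ trace cp A ⊆ intU cp (trace cp B) := by
  constructor
  · rintro ⟨D, hAD, hDB⟩
    exact (trace_subset_intU_of_ll hAD).trans (intU_mono (trace_subset_trace_of_sqsub hDB))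
  intro h
  -- Otherwise `X = ∅` and the family of all sets is a boundary cluster lying in every closure.
  have hempty : ∅ ∈ cp.B := by
    by_contra hempty
    have hU := univ_mem_UX hempty
    exact (h ⟨hU, trivial⟩).2 ⟨hU, fun _ _ => trivial⟩
  obtain ⟨C, hAC, hCB⟩ := exists_ll_trace_subset hempty h
  exact ⟨C, hAC, sqsub_of_trace_subset_trace hempty hCB⟩
end
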